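/- Let a ∈ (0,π). There exists a constant C > 0 (depending on V and a) such that for every z ∈ ℂ and every n ∈ ℕ: (1) |∫_a^π cos(√z x) ((π−x)/(π−a)) ρ(x) sin(nx) dx| ≤ (C/n) e^{π|Im √z|} (1 + |z|/(1 + π|z|^{1/2})); and (2) |∫_a^π F(x,z) ((π−x)/(π−a)) ρ(x) sin(nx) dx| ≤ (C/n) e^{π|Im √z|} (1 + 1/(1 + π|z|^{1/2})). -/

import Mathlib

/-!
With `s = √z`, the free solutions `c(x) = cos (s x)` and `σ(x) = sin (s x) / s` are bounded by
`e^{|Im s| x}` (resp. `x e^{|Im s| x}`), and variation of constants writes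
`F(x) = ∫₀ˣ σ(x - t) V(t) ξ(t) dt` and `F'(x) = ∫₀ˣ c(x - t) V(t) ξ(t) dt`. A Grönwall argument for
`e^{-|Im s| x} |ξ(x)|` then bounds `ξ`, `F` and `F'` by constants times `e^{|Im s| x}`, uniformly
in `z`. Each integral is of the form `∫_a^π φ g sin (n x)` with the cutoff `g = (π - x)/(π - a) ρ`
vanishing at `π`, so one integration by parts against `sin (n x)` gains the factor `1/n`; the
derivative `c' = -s² σ` costs the factor `|s| ≲ 1 + |z| / (1 + π |s|)` in the first estimate.
-/

open MeasureTheory Real Set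

theorem Complex.norm_cos_le_exp_abs_im (w : ℂ) : ‖Complex.cos w‖ ≤ Real.exp |w.im| := by
  have h₁ : ‖Complex.exp (w * Complex.I)‖ ≤ Real.exp |w.im| := by
    rw [Complex.norm_exp]; gcongr; simpa using neg_le_abs w.im
  have h₂ : ‖Complex.exp (-w * Complex.I)‖ ≤ Real.exp |w.im| := by
    rw [Complex.norm_exp]; gcongr; simpa using le_abs_self w.im
  rw [Complex.cos, norm_div, Complex.norm_two]
  linarith [norm_add_le (Complex.exp (w * Complex.I)) (Complex.exp (-w * Complex.I))]

theorem Complex.norm_sin_le_exp_abs_im (w : ℂ) : ‖Complex.sin w‖ ≤ Real.exp |w.im| := by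
  simpa [Complex.cos_pi_div_two_sub] using Complex.norm_cos_le_exp_abs_im (π / 2 - w)

/-- `freeCos s` and `freeSin s` solve `-y'' = s² y` with data `(1, 0)` and `(0, 1)` at `0`; the
case split makes `freeSin 0 x = x`. -/
noncomputable def freeCos (s : ℂ) (x : ℝ) : ℂ := Complex.cos (s * x)

noncomputable def freeSin (s : ℂ) (x : ℝ) : ℂ := if s = 0 then x else Complex.sin (s * x) / s

section FreeSolutions

variable (s : ℂ) (x t : ℝ)

@[simp] theorem freeCos_zero : freeCos s 0 = 1 := by simp [freeCos]

@[simp] theorem freeSin_zero : freeSin s 0 = 0 := by simp [freeSin]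

theorem mul_freeSin : s * freeSin s x = Complex.sin (s * x) := by
  unfold freeSin
  split_ifs with hs
  · simp [hs]
  · field_simp

theorem hasDerivAt_freeCos : HasDerivAt (freeCos s) (-(s ^ 2 * freeSin s x)) x := by
  have h := ((Complex.hasDerivAt_cos (s * x)).comp (x : ℂ)
    ((hasDerivAt_id (x : ℂ)).const_mul s)).comp_ofReal
  exact h.congr_deriv (by rw [pow_two, mul_assoc, mul_freeSin]; ring)

theorem hasDerivAt_freeSin : HasDerivAt (freeSin s) (freeCos s x) x := by
  by_cases hs : s = 0
  · subst hs
    have h : freeSin 0 = fun y : ℝ => (y : ℂ) := by ext; simp [freeSin]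
    rw [h]
    simpa [freeCos] using (hasDerivAt_id (x : ℂ)).comp_ofReal
  · have h : freeSin s = fun y : ℝ => Complex.sin (s * y) / s := by ext; simp [freeSin, hs]
    rw [h]
    exact ((((Complex.hasDerivAt_sin (s * x)).comp (x : ℂ)
      ((hasDerivAt_id (x : ℂ)).const_mul s)).comp_ofReal).div_const s).congr_deriv
      (by field_simp; rfl)

theorem continuous_freeCos : Continuous (freeCos s) := by unfold freeCos; fun_prop

theorem continuous_freeSin : Continuous (freeSin s) :=
  continuous_iff_continuousAt.2 fun x => (hasDerivAt_freeSin s x).continuousAt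

theorem freeCos_sq_add_sq_mul_freeSin_sq : freeCos s x ^ 2 + s ^ 2 * freeSin s x ^ 2 = 1 := by
  rw [← mul_pow, mul_freeSin, freeCos, Complex.cos_sq_add_sin_sq]

theorem freeCos_sub :
    freeCos s (x - t) = freeCos s x * freeCos s t + s ^ 2 * (freeSin s x * freeSin s t) := by
  have := Complex.cos_sub (s * x) (s * t)
  rw [← mul_sub, ← Complex.ofReal_sub] at this
  rw [freeCos, this, pow_two, mul_mul_mul_comm, mul_freeSin, mul_freeSin, freeCos, freeCos]

theorem freeSin_sub :
    freeSin s (x - t) = freeSin s x * freeCos s t - freeCos s x * freeSin s t := by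
  by_cases hs : s = 0
  · simp [freeSin, freeCos, hs]
  · apply mul_left_cancel₀ hs
    have h := Complex.sin_sub (s * x) (s * t)
    rw [← mul_sub, ← Complex.ofReal_sub, ← mul_freeSin] at h
    unfold freeCos
    linear_combination h - Complex.cos (s * t) * mul_freeSin s x
      + Complex.cos (s * x) * mul_freeSin s t

variable {x}

theorem norm_freeCos_le (hx : 0 ≤ x) : ‖freeCos s x‖ ≤ Real.exp (|s.im| * x) := by
  simpa [freeCos, abs_mul, abs_of_nonneg hx] using Complex.norm_cos_le_exp_abs_im (s * x)

theorem norm_sq_mul_freeSin_le (hx : 0 ≤ x) :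
    ‖s ^ 2 * freeSin s x‖ ≤ ‖s‖ * Real.exp (|s.im| * x) := by
  rw [pow_two, mul_assoc, mul_freeSin, norm_mul]
  gcongr
  simpa [abs_mul, abs_of_nonneg hx] using Complex.norm_sin_le_exp_abs_im (s * x)

theorem norm_freeSin_le (hx : 0 ≤ x) : ‖freeSin s x‖ ≤ x * Real.exp (|s.im| * x) := by
  have := norm_image_sub_le_of_norm_deriv_le_segment'
    (fun y _ => (hasDerivAt_freeSin s y).hasDerivWithinAt)
    (C := Real.exp (|s.im| * x))
    (fun y hy => (norm_freeCos_le s hy.1).trans (by gcongr; exact hy.2.le)) x ⟨hx, le_rfl⟩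
  simpa [mul_comm] using this

end FreeSolutions

section Calculus

variable {E : Type*} [NormedAddCommGroup E] [NormedSpace ℝ E] [CompleteSpace E] {a b x : ℝ}

theorem hasDerivWithinAt_integral_Icc {f : ℝ → E} (hf : ContinuousOn f (Icc a b))
    (hx : x ∈ Icc a b) : HasDerivWithinAt (fun u => ∫ t in a..u, f t) (f x) (Icc a b) x := by
  have : Fact (x ∈ Icc a b) := ⟨hx⟩
  exact intervalIntegral.integral_hasDerivWithinAt_right
    (hf.mono (uIcc_subset_Icc (left_mem_Icc.2 (hx.1.trans hx.2)) hx)).intervalIntegrable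
    (hf.stronglyMeasurableAtFilter_nhdsWithin measurableSet_Icc x) (hf x hx)

theorem integral_eq_sub_of_hasDerivWithinAt_Icc {f f' : ℝ → E}
    (hf : ∀ t ∈ Icc a b, HasDerivWithinAt f (f' t) (Icc a b) t)
    (hf' : ContinuousOn f' (Icc a b)) (hx : x ∈ Icc a b) :
    ∫ t in a..x, f' t = f x - f a := by
  have hsub : Icc a x ⊆ Icc a b := Icc_subset_Icc_right hx.2
  refine intervalIntegral.integral_eq_sub_of_hasDerivAt_of_le hx.1
    (fun t ht => (hf t (hsub ht)).continuousWithinAt.mono hsub)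
    (fun t ht => (hf t (hsub (Ioo_subset_Icc_self ht))).hasDerivAt
      (Icc_mem_nhds ht.1 (ht.2.trans_le hx.2))) ?_
  exact (hf'.mono (uIcc_subset_Icc (left_mem_Icc.2 (hx.1.trans hx.2)) hx)).intervalIntegrable

theorem le_exp_of_le_one_add_mul_integral {g : ℝ → ℝ} {K : ℝ} (hK : 0 ≤ K)
    (hg : ContinuousOn g (Icc a b)) (h : ∀ x ∈ Icc a b, g x ≤ 1 + K * ∫ t in a..x, g t) :
    ∀ x ∈ Icc a b, g x ≤ Real.exp (K * (x - a)) := by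
  have hG : ∀ x ∈ Icc a b, HasDerivWithinAt (fun u => ∫ t in a..u, g t) (g x) (Icc a b) x :=
    fun x hx => hasDerivWithinAt_integral_Icc hg hx
  have hgronwall := le_gronwallBound_of_liminf_deriv_right_le (δ := 0) (ε := 1)
    (fun x hx => (hG x hx).continuousWithinAt)
    (fun x hx r hr => ((hG x (Ico_subset_Icc_self hx)).mono_of_mem_nhdsWithin
      (Icc_mem_nhdsGE_of_mem hx)).liminf_right_slope_le hr)
    (by simp) (fun x hx => by linarith [h x (Ico_subset_Icc_self hx)])
  have hbound : ∀ y, 1 + K * gronwallBound 0 K 1 y = Real.exp (K * y) := by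
    intro y
    rcases hK.eq_or_lt with rfl | hK
    · simp [gronwallBound_K0]
    · simp only [gronwallBound_of_K_ne_0 hK.ne', zero_mul, zero_add]
      field_simp
      ring
  intro x hx
  calc g x ≤ 1 + K * ∫ t in a..x, g t := h x hx
    _ ≤ 1 + K * gronwallBound 0 K 1 (x - a) := by gcongr; exact hgronwall x hx
    _ = Real.exp (K * (x - a)) := hbound _

end Calculus

theorem norm_integral_comp_sub_mul_le {k f : ℝ → ℂ} {x τ A B : ℝ} (hx : 0 ≤ x)
    (hk : ∀ t ∈ Icc 0 x, ‖k (x - t)‖ ≤ B * Real.exp (τ * (x - t)))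
    (hf : ∀ t ∈ Icc 0 x, ‖f t‖ ≤ A * Real.exp (τ * t)) :
    ‖∫ t in 0..x, k (x - t) * f t‖ ≤ B * A * Real.exp (τ * x) * x := by
  have := intervalIntegral.norm_integral_le_of_norm_le_const
    (C := B * A * Real.exp (τ * x)) fun t ht => by
      rw [uIoc_of_le hx] at ht
      have ht' : t ∈ Icc 0 x := Ioc_subset_Icc_self ht
      calc ‖k (x - t) * f t‖
          ≤ B * Real.exp (τ * (x - t)) * (A * Real.exp (τ * t)) := by
            rw [norm_mul]
            exact mul_le_mul (hk t ht') (hf t ht') (norm_nonneg _)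
              ((norm_nonneg _).trans (hk t ht'))
        _ = B * A * Real.exp (τ * x) := by
            rw [show τ * x = τ * (x - t) + τ * t by ring, Real.exp_add]
            ring
  rwa [sub_zero, abs_of_nonneg hx] at this

structure IsCosineTypeSolution (q : ℝ → ℂ) (s : ℂ) (b : ℝ) (u u' : ℝ → ℂ) : Prop where
  hasDerivWithinAt : ∀ x ∈ Icc 0 b, HasDerivWithinAt u (u' x) (Icc 0 b) x
  hasDerivWithinAt_deriv :
    ∀ x ∈ Icc 0 b, HasDerivWithinAt u' ((q x - s ^ 2) * u x) (Icc 0 b) x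
  apply_zero : u 0 = 1
  deriv_zero : u' 0 = 0

namespace IsCosineTypeSolution

variable {q u u' : ℝ → ℂ} {s : ℂ} {b x t M : ℝ}

theorem continuousOn (hu : IsCosineTypeSolution q s b u u') : ContinuousOn u (Icc 0 b) :=
  fun x hx => (hu.hasDerivWithinAt x hx).continuousWithinAt

theorem continuousOn_deriv (hu : IsCosineTypeSolution q s b u u') : ContinuousOn u' (Icc 0 b) :=
  fun x hx => (hu.hasDerivWithinAt_deriv x hx).continuousWithinAt

theorem intervalIntegrable_mul (hu : IsCosineTypeSolution q s b u u')
    (hq : ContinuousOn q (Icc 0 b)) {φ : ℝ → ℂ} (hφ : Continuous φ) (hx : x ∈ Icc 0 b) :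
    IntervalIntegrable (fun t => φ t * (q t * u t)) volume 0 x :=
  ((hφ.continuousOn.mul (hq.mul hu.continuousOn)).mono
    (uIcc_subset_Icc (left_mem_Icc.2 (hx.1.trans hx.2)) hx)).intervalIntegrable

theorem freeCos_mul_sub_freeSin_mul (hu : IsCosineTypeSolution q s b u u')
    (hq : ContinuousOn q (Icc 0 b)) (hx : x ∈ Icc 0 b) :
    freeCos s x * u x - freeSin s x * u' x = 1 - ∫ t in 0..x, freeSin s t * (q t * u t) := by
  have hderiv : ∀ t ∈ Icc 0 b, HasDerivWithinAt (fun y => freeCos s y * u y - freeSin s y * u' y)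
      (-(freeSin s t * (q t * u t))) (Icc 0 b) t := fun t ht =>
    (((hasDerivAt_freeCos s t).hasDerivWithinAt.mul (hu.hasDerivWithinAt t ht)).sub
      ((hasDerivAt_freeSin s t).hasDerivWithinAt.mul
        (hu.hasDerivWithinAt_deriv t ht))).congr_deriv (by ring)
  have := integral_eq_sub_of_hasDerivWithinAt_Icc hderiv
    ((continuous_freeSin s).continuousOn.mul (hq.mul hu.continuousOn)).neg hx
  rw [intervalIntegral.integral_neg, freeCos_zero, freeSin_zero, hu.apply_zero] at this
  linear_combination -this

theorem freeCos_mul_deriv_add (hu : IsCosineTypeSolution q s b u u')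
    (hq : ContinuousOn q (Icc 0 b)) (hx : x ∈ Icc 0 b) :
    freeCos s x * u' x + s ^ 2 * (freeSin s x * u x) =
      ∫ t in 0..x, freeCos s t * (q t * u t) := by
  have hderiv : ∀ t ∈ Icc 0 b,
      HasDerivWithinAt (fun y => freeCos s y * u' y + s ^ 2 * (freeSin s y * u y))
        (freeCos s t * (q t * u t)) (Icc 0 b) t := fun t ht =>
    (((hasDerivAt_freeCos s t).hasDerivWithinAt.mul (hu.hasDerivWithinAt_deriv t ht)).add
      (((hasDerivAt_freeSin s t).hasDerivWithinAt.mul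
        (hu.hasDerivWithinAt t ht)).const_mul (s ^ 2))).congr_deriv (by ring)
  rw [integral_eq_sub_of_hasDerivWithinAt_Icc hderiv
    ((continuous_freeCos s).continuousOn.mul (hq.mul hu.continuousOn)) hx]
  simp [hu.deriv_zero]

theorem sub_freeCos_eq_integral (hu : IsCosineTypeSolution q s b u u')
    (hq : ContinuousOn q (Icc 0 b)) (hx : x ∈ Icc 0 b) :
    u x - freeCos s x = ∫ t in 0..x, freeSin s (x - t) * (q t * u t) := by
  calc u x - freeCos s x
      = freeSin s x * (∫ t in 0..x, freeCos s t * (q t * u t))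
          - freeCos s x * ∫ t in 0..x, freeSin s t * (q t * u t) := by
        linear_combination -u x * freeCos_sq_add_sq_mul_freeSin_sq s x
          + freeCos s x * hu.freeCos_mul_sub_freeSin_mul hq hx
          + freeSin s x * hu.freeCos_mul_deriv_add hq hx
    _ = ∫ t in 0..x, (freeSin s x * (freeCos s t * (q t * u t))
          - freeCos s x * (freeSin s t * (q t * u t))) := by
        rw [intervalIntegral.integral_sub
            ((hu.intervalIntegrable_mul hq (continuous_freeCos s) hx).const_mul _)
            ((hu.intervalIntegrable_mul hq (continuous_freeSin s) hx).const_mul _),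
          intervalIntegral.integral_const_mul, intervalIntegral.integral_const_mul]
    _ = ∫ t in 0..x, freeSin s (x - t) * (q t * u t) :=
        intervalIntegral.integral_congr fun t _ => by simp only [freeSin_sub]; ring

theorem deriv_add_eq_integral (hu : IsCosineTypeSolution q s b u u')
    (hq : ContinuousOn q (Icc 0 b)) (hx : x ∈ Icc 0 b) :
    u' x + s ^ 2 * freeSin s x = ∫ t in 0..x, freeCos s (x - t) * (q t * u t) := by
  calc u' x + s ^ 2 * freeSin s x
      = freeCos s x * (∫ t in 0..x, freeCos s t * (q t * u t))
          + s ^ 2 * freeSin s x * ∫ t in 0..x, freeSin s t * (q t * u t) := by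
        linear_combination -u' x * freeCos_sq_add_sq_mul_freeSin_sq s x
          - s ^ 2 * freeSin s x * hu.freeCos_mul_sub_freeSin_mul hq hx
          + freeCos s x * hu.freeCos_mul_deriv_add hq hx
    _ = ∫ t in 0..x, (freeCos s x * (freeCos s t * (q t * u t))
          + s ^ 2 * freeSin s x * (freeSin s t * (q t * u t))) := by
        rw [intervalIntegral.integral_add
            ((hu.intervalIntegrable_mul hq (continuous_freeCos s) hx).const_mul _)
            ((hu.intervalIntegrable_mul hq (continuous_freeSin s) hx).const_mul _),
          intervalIntegral.integral_const_mul, intervalIntegral.integral_const_mul]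
    _ = ∫ t in 0..x, freeCos s (x - t) * (q t * u t) :=
        intervalIntegral.integral_congr fun t _ => by simp only [freeCos_sub]; ring

theorem norm_sub_freeCos_le_integral (hu : IsCosineTypeSolution q s b u u')
    (hq : ContinuousOn q (Icc 0 b)) (hM : ∀ t ∈ Icc 0 b, ‖q t‖ ≤ M) (hx : x ∈ Icc 0 b) :
    ‖u x - freeCos s x‖ ≤ M * b * Real.exp (|s.im| * x) *
      ∫ t in 0..x, ‖u t‖ * Real.exp (-(|s.im| * t)) := by
  have hsub : Icc 0 x ⊆ Icc 0 b := Icc_subset_Icc_right hx.2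
  rw [hu.sub_freeCos_eq_integral hq hx, ← intervalIntegral.integral_const_mul]
  refine intervalIntegral.norm_integral_le_of_norm_le hx.1 (ae_of_all _ fun t ht => ?_) ?_
  · have ht' : t ∈ Icc 0 x := Ioc_subset_Icc_self ht
    calc ‖freeSin s (x - t) * (q t * u t)‖
        ≤ b * Real.exp (|s.im| * (x - t)) * (M * ‖u t‖) := by
          rw [norm_mul, norm_mul]
          refine mul_le_mul ((norm_freeSin_le s (sub_nonneg.2 ht'.2)).trans ?_)
            (mul_le_mul_of_nonneg_right (hM t (hsub ht')) (norm_nonneg _)) (by positivity)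
            (mul_nonneg (hx.1.trans hx.2) (Real.exp_pos _).le)
          gcongr
          linarith [ht'.1, hx.2]
      _ = M * b * Real.exp (|s.im| * x) * (‖u t‖ * Real.exp (-(|s.im| * t))) := by
          rw [mul_sub, Real.exp_sub, Real.exp_neg]
          ring
  · refine ContinuousOn.intervalIntegrable (continuousOn_const.mul ?_)
    rw [uIcc_of_le hx.1]
    exact ((continuous_norm.comp_continuousOn hu.continuousOn).mul
      (by fun_prop : Continuous fun t : ℝ => Real.exp (-(|s.im| * t))).continuousOn).mono hsub

theorem norm_le (hu : IsCosineTypeSolution q s b u u') (hq : ContinuousOn q (Icc 0 b))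
    (hM : ∀ t ∈ Icc 0 b, ‖q t‖ ≤ M) (hx : x ∈ Icc 0 b) :
    ‖u x‖ ≤ Real.exp (M * b * x) * Real.exp (|s.im| * x) := by
  set m : ℝ → ℝ := fun t => ‖u t‖ * Real.exp (-(|s.im| * t))
  have hm : ContinuousOn m (Icc 0 b) :=
    (continuous_norm.comp_continuousOn hu.continuousOn).mul (by fun_prop)
  have hMb : 0 ≤ M * b :=
    mul_nonneg ((norm_nonneg _).trans (hM 0 (left_mem_Icc.2 (hx.1.trans hx.2))))
      (hx.1.trans hx.2)
  have hrec : ∀ y ∈ Icc 0 b, m y ≤ 1 + M * b * ∫ t in 0..y, m t := fun y hy => by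
    have hbound := (norm_le_norm_add_norm_sub' (u y) (freeCos s y)).trans
      (add_le_add (norm_freeCos_le s hy.1) (hu.norm_sub_freeCos_le_integral hq hM hy))
    calc m y ≤ (Real.exp (|s.im| * y) + M * b * Real.exp (|s.im| * y) * ∫ t in 0..y, m t)
          * Real.exp (-(|s.im| * y)) := by
          simp only [m]
          gcongr
      _ = 1 + M * b * ∫ t in 0..y, m t := by
          rw [Real.exp_neg]
          field_simp
  calc ‖u x‖ = m x * Real.exp (|s.im| * x) := by
        simp only [m, mul_assoc, ← Real.exp_add, neg_add_cancel, Real.exp_zero, mul_one]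
    _ ≤ Real.exp (M * b * x) * Real.exp (|s.im| * x) := by
        gcongr
        simpa using le_exp_of_le_one_add_mul_integral hMb hm hrec x hx

theorem norm_potential_mul_le (hu : IsCosineTypeSolution q s b u u')
    (hq : ContinuousOn q (Icc 0 b)) (hM : ∀ t ∈ Icc 0 b, ‖q t‖ ≤ M) (ht : t ∈ Icc 0 b) :
    ‖q t * u t‖ ≤ M * Real.exp (M * b ^ 2) * Real.exp (|s.im| * t) := by
  have hM0 : 0 ≤ M := (norm_nonneg _).trans (hM t ht)
  rw [norm_mul, mul_assoc]
  refine mul_le_mul (hM t ht) ((hu.norm_le hq hM ht).trans ?_) (norm_nonneg _) hM0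
  refine mul_le_mul_of_nonneg_right (Real.exp_le_exp.2 ?_) (Real.exp_pos _).le
  rw [pow_two, ← mul_assoc]
  exact mul_le_mul_of_nonneg_left ht.2 (mul_nonneg hM0 (ht.1.trans ht.2))

theorem norm_sub_freeCos_le (hu : IsCosineTypeSolution q s b u u')
    (hq : ContinuousOn q (Icc 0 b)) (hM : ∀ t ∈ Icc 0 b, ‖q t‖ ≤ M) (hx : x ∈ Icc 0 b) :
    ‖u x - freeCos s x‖ ≤ b ^ 2 * M * Real.exp (M * b ^ 2) * Real.exp (|s.im| * x) := by
  rw [hu.sub_freeCos_eq_integral hq hx]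
  refine (norm_integral_comp_sub_mul_le hx.1 (B := b)
    (fun t ht => (norm_freeSin_le s (sub_nonneg.2 ht.2)).trans (by gcongr; linarith [ht.1, hx.2]))
    (fun t ht => hu.norm_potential_mul_le hq hM ⟨ht.1, ht.2.trans hx.2⟩)).trans ?_
  have hM0 : 0 ≤ M := (norm_nonneg _).trans (hM x hx)
  have hb0 : 0 ≤ b := hx.1.trans hx.2
  calc b * (M * Real.exp (M * b ^ 2)) * Real.exp (|s.im| * x) * x
      ≤ b * (M * Real.exp (M * b ^ 2)) * Real.exp (|s.im| * x) * b := by gcongr; exact hx.2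
    _ = b ^ 2 * M * Real.exp (M * b ^ 2) * Real.exp (|s.im| * x) := by ring

theorem norm_deriv_add_le (hu : IsCosineTypeSolution q s b u u')
    (hq : ContinuousOn q (Icc 0 b)) (hM : ∀ t ∈ Icc 0 b, ‖q t‖ ≤ M) (hx : x ∈ Icc 0 b) :
    ‖u' x + s ^ 2 * freeSin s x‖ ≤ b * M * Real.exp (M * b ^ 2) * Real.exp (|s.im| * x) := by
  rw [hu.deriv_add_eq_integral hq hx]
  refine (norm_integral_comp_sub_mul_le hx.1 (B := 1)
    (fun t ht => (norm_freeCos_le s (sub_nonneg.2 ht.2)).trans_eq (one_mul _).symm)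
    (fun t ht => hu.norm_potential_mul_le hq hM ⟨ht.1, ht.2.trans hx.2⟩)).trans ?_
  have hM0 : 0 ≤ M := (norm_nonneg _).trans (hM x hx)
  calc 1 * (M * Real.exp (M * b ^ 2)) * Real.exp (|s.im| * x) * x
      ≤ 1 * (M * Real.exp (M * b ^ 2)) * Real.exp (|s.im| * x) * b := by gcongr; exact hx.2
    _ = b * M * Real.exp (M * b ^ 2) * Real.exp (|s.im| * x) := by ring

end IsCosineTypeSolution

theorem norm_integral_mul_sin_le {h h' : ℝ → ℂ} {a b ω B₀ B₁ : ℝ} (hab : a ≤ b) (hω : 0 < ω)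
    (hc : ContinuousOn h (Icc a b)) (hd : ∀ x ∈ Ioo a b, HasDerivAt h (h' x) x)
    (hc' : ContinuousOn h' (Icc a b)) (hb : h b = 0)
    (hB₀ : ‖h a‖ ≤ B₀) (hB₁ : ∀ x ∈ Icc a b, ‖h' x‖ ≤ B₁) :
    ‖∫ x in a..b, h x * Complex.sin (ω * x)‖ ≤ (B₀ + (b - a) * B₁) / ω := by
  have hω' : (ω : ℂ) ≠ 0 := Complex.ofReal_ne_zero.2 hω.ne'
  set v : ℝ → ℂ := fun x => -Complex.cos (ω * x) / ω
  have hv : ∀ x : ℝ, HasDerivAt v (Complex.sin (ω * x)) x := fun x =>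
    ((((Complex.hasDerivAt_cos (ω * x)).comp (x : ℂ)
      ((hasDerivAt_id (x : ℂ)).const_mul (ω : ℂ))).comp_ofReal).neg.div_const (ω : ℂ)).congr_deriv
      (by field_simp)
  have hvb : ∀ x, ‖v x‖ ≤ 1 / ω := fun x => by
    rw [norm_div, norm_neg, Complex.norm_real, Real.norm_of_nonneg hω.le]
    gcongr
    simpa using Complex.norm_cos_le_exp_abs_im (ω * x)
  rw [intervalIntegral.integral_mul_deriv_eq_deriv_mul_of_hasDerivAt
      (by rwa [uIcc_of_le hab]) (by fun_prop) (by simpa [hab] using hd) (fun x _ => hv x)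
      (by rw [← uIcc_of_le hab] at hc'; exact hc'.intervalIntegrable)
      (Continuous.intervalIntegrable (by fun_prop) _ _),
    hb, zero_mul, zero_sub]
  have hint : ‖∫ x in a..b, h' x * v x‖ ≤ B₁ * (1 / ω) * |b - a| :=
    intervalIntegral.norm_integral_le_of_norm_le_const fun x hx => by
      rw [uIoc_of_le hab] at hx
      rw [norm_mul]
      exact mul_le_mul (hB₁ x (Ioc_subset_Icc_self hx)) (hvb x) (norm_nonneg _)
        ((norm_nonneg _).trans (hB₁ x (Ioc_subset_Icc_self hx)))
  calc ‖-(h a * v a) - ∫ x in a..b, h' x * v x‖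
      ≤ ‖h a‖ * ‖v a‖ + ‖∫ x in a..b, h' x * v x‖ := by
        rw [← norm_mul, ← norm_neg (h a * v a)]; exact norm_sub_le _ _
    _ ≤ B₀ * (1 / ω) + B₁ * (1 / ω) * |b - a| :=
        add_le_add (mul_le_mul hB₀ (hvb a) (norm_nonneg _) ((norm_nonneg _).trans hB₀)) hint
    _ = (B₀ + (b - a) * B₁) / ω := by rw [abs_of_nonneg (sub_nonneg.2 hab)]; ring

theorem le_mul_one_add_sq_div {r p : ℝ} (hr : 0 ≤ r) (hp : 0 ≤ p) :
    r ≤ (1 + p) * (1 + r ^ 2 / (1 + p * r)) := by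
  have hd : 0 < 1 + p * r := by positivity
  have key : r * (1 + p * r) ≤ (1 + p) * (1 + p * r + r ^ 2) := by
    nlinarith [sq_nonneg (r - 1), mul_nonneg hp hr, mul_nonneg (mul_nonneg hp hr) hr]
  calc r ≤ (1 + p) * (1 + p * r + r ^ 2) / (1 + p * r) := by rwa [le_div_iff₀ hd]
    _ = (1 + p) * (1 + r ^ 2 / (1 + p * r)) := by field_simp

structure IsC1Cutoff (g g' : ℝ → ℝ) (a b G₀ G₁ : ℝ) : Prop where
  continuousOn : ContinuousOn g (Icc a b)
  hasDerivAt : ∀ x ∈ Ioo a b, HasDerivAt g (g' x) x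
  continuousOn_deriv : ContinuousOn g' (Icc a b)
  apply_right : g b = 0
  abs_le : ∀ x ∈ Icc a b, |g x| ≤ G₀
  abs_deriv_le : ∀ x ∈ Icc a b, |g' x| ≤ G₁

namespace IsC1Cutoff

variable {g g' : ℝ → ℝ} {a b G₀ G₁ ω : ℝ}

theorem norm_integral_mul_sin_le (hg : IsC1Cutoff g g' a b G₀ G₁) (hab : a ≤ b) (hω : 0 < ω)
    {φ φ' : ℝ → ℂ} {A₀ A₁ : ℝ} (hφc : ContinuousOn φ (Icc a b))
    (hφd : ∀ x ∈ Ioo a b, HasDerivAt φ (φ' x) x) (hφ'c : ContinuousOn φ' (Icc a b))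
    (hφ : ∀ x ∈ Icc a b, ‖φ x‖ ≤ A₀) (hφ' : ∀ x ∈ Icc a b, ‖φ' x‖ ≤ A₁) :
    ‖∫ x in a..b, φ x * g x * Complex.sin (ω * x)‖ ≤
      (A₀ * G₀ + (b - a) * (A₁ * G₀ + A₀ * G₁)) / ω := by
  have hgc := Complex.continuous_ofReal.comp_continuousOn hg.continuousOn
  have hg'c := Complex.continuous_ofReal.comp_continuousOn hg.continuousOn_deriv
  have hA₀ : ∀ x ∈ Icc a b, 0 ≤ A₀ := fun x hx => (norm_nonneg _).trans (hφ x hx)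
  refine _root_.norm_integral_mul_sin_le (h' := fun x => φ' x * g x + φ x * g' x) hab hω
    (hφc.mul hgc) (fun x hx => (hφd x hx).mul (hg.hasDerivAt x hx).ofReal_comp)
    ((hφ'c.mul hgc).add (hφc.mul hg'c)) (by simp [hg.apply_right]) ?_ fun x hx => ?_
  · have ha : a ∈ Icc a b := left_mem_Icc.2 hab
    rw [norm_mul, Complex.norm_real, Real.norm_eq_abs]
    exact mul_le_mul (hφ a ha) (hg.abs_le a ha) (abs_nonneg _) (hA₀ a ha)
  · refine (norm_add_le _ _).trans (add_le_add ?_ ?_) <;>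
      rw [norm_mul, Complex.norm_real, Real.norm_eq_abs]
    · exact mul_le_mul (hφ' x hx) (hg.abs_le x hx) (abs_nonneg _)
        ((norm_nonneg _).trans (hφ' x hx))
    · exact mul_le_mul (hφ x hx) (hg.abs_deriv_le x hx) (abs_nonneg _) (hA₀ x hx)

theorem norm_integral_freeCos_mul_sin_le (hg : IsC1Cutoff g g' a b G₀ G₁) (ha : 0 ≤ a)
    (hab : a ≤ b) (hω : 0 < ω) (s : ℂ) :
    ‖∫ x in a..b, freeCos s x * g x * Complex.sin (ω * x)‖ ≤
      (G₀ + (b - a) * G₁ + (1 + b) * ((b - a) * G₀)) * Real.exp (b * |s.im|) *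
        (1 + ‖s‖ ^ 2 / (1 + b * ‖s‖)) / ω := by
  have hb : 0 ≤ b := ha.trans hab
  have hG₀ : 0 ≤ G₀ := (abs_nonneg _).trans (hg.abs_le a ⟨le_rfl, hab⟩)
  have hG₁ : 0 ≤ G₁ := (abs_nonneg _).trans (hg.abs_deriv_le a ⟨le_rfl, hab⟩)
  have hba : 0 ≤ b - a := sub_nonneg.2 hab
  have key : G₀ + (b - a) * (‖s‖ * G₀ + G₁) ≤
      (G₀ + (b - a) * G₁ + (1 + b) * ((b - a) * G₀)) * (1 + ‖s‖ ^ 2 / (1 + b * ‖s‖)) := by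
    nlinarith [mul_le_mul_of_nonneg_left (le_mul_one_add_sq_div (norm_nonneg s) hb)
      (mul_nonneg hba hG₀), mul_nonneg (add_nonneg hG₀ (mul_nonneg hba hG₁))
      (by positivity : 0 ≤ ‖s‖ ^ 2 / (1 + b * ‖s‖))]
  calc ‖∫ x in a..b, freeCos s x * g x * Complex.sin (ω * x)‖
      ≤ (Real.exp (b * |s.im|) * G₀ + (b - a) * (‖s‖ * Real.exp (b * |s.im|) * G₀
          + Real.exp (b * |s.im|) * G₁)) / ω :=
        hg.norm_integral_mul_sin_le hab hω (continuous_freeCos s).continuousOn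
          (fun x _ => hasDerivAt_freeCos s x)
          (continuous_const.mul (continuous_freeSin s)).neg.continuousOn
          (fun x hx => (norm_freeCos_le s (ha.trans hx.1)).trans
            (by rw [mul_comm b |s.im|]; gcongr; exact hx.2))
          fun x hx => (norm_neg (s ^ 2 * freeSin s x)).trans_le <|
            (norm_sq_mul_freeSin_le s (ha.trans hx.1)).trans
              (by rw [mul_comm b |s.im|]; gcongr; exact hx.2)
    _ = (G₀ + (b - a) * (‖s‖ * G₀ + G₁)) * Real.exp (b * |s.im|) / ω := by ring
    _ ≤ (G₀ + (b - a) * G₁ + (1 + b) * ((b - a) * G₀)) * (1 + ‖s‖ ^ 2 / (1 + b * ‖s‖))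
          * Real.exp (b * |s.im|) / ω := by gcongr
    _ = _ := by ring

theorem norm_integral_sub_freeCos_mul_sin_le (hg : IsC1Cutoff g g' a b G₀ G₁) (ha : 0 ≤ a)
    (hab : a ≤ b) (hω : 0 < ω) {q u u' : ℝ → ℂ} {s : ℂ} {M : ℝ}
    (hu : IsCosineTypeSolution q s b u u') (hq : ContinuousOn q (Icc 0 b))
    (hM : ∀ t ∈ Icc 0 b, ‖q t‖ ≤ M) :
    ‖∫ x in a..b, (u x - freeCos s x) * g x * Complex.sin (ω * x)‖ ≤
      (b * G₀ + (b - a) * (G₀ + b * G₁)) * (b * M * Real.exp (M * b ^ 2)) *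
        Real.exp (b * |s.im|) / ω := by
  have hsub : Icc a b ⊆ Icc 0 b := Icc_subset_Icc_left ha
  have hM0 : 0 ≤ M := (norm_nonneg _).trans (hM b ⟨ha.trans hab, le_rfl⟩)
  have hb0 : 0 ≤ b := ha.trans hab
  refine (hg.norm_integral_mul_sin_le hab hω
    ((hu.continuousOn.mono hsub).sub (continuous_freeCos s).continuousOn)
    (fun x hx => (((hu.hasDerivWithinAt x (hsub (Ioo_subset_Icc_self hx))).hasDerivAt
      (Icc_mem_nhds (ha.trans_lt hx.1) hx.2)).sub (hasDerivAt_freeCos s x)).congr_deriv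
      (sub_neg_eq_add _ _))
    ((hu.continuousOn_deriv.mono hsub).add
      (continuous_const.mul (continuous_freeSin s)).continuousOn)
    (A₀ := b ^ 2 * M * Real.exp (M * b ^ 2) * Real.exp (b * |s.im|))
    (A₁ := b * M * Real.exp (M * b ^ 2) * Real.exp (b * |s.im|))
    (fun x hx => (hu.norm_sub_freeCos_le hq hM (hsub hx)).trans
      (by rw [mul_comm b |s.im|]; gcongr; exact hx.2))
    (fun x hx => (hu.norm_deriv_add_le hq hM (hsub hx)).trans
      (by rw [mul_comm b |s.im|]; gcongr; exact hx.2))).trans_eq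
    (by ring)

end IsC1Cutoff

theorem exists_isC1Cutoff {ρ ρ' : ℝ → ℝ} {a b : ℝ} (hρ : ContinuousOn ρ (Icc a b))
    (hρd : ∀ x ∈ Ioo a b, HasDerivAt ρ (ρ' x) x) (hρ' : ContinuousOn ρ' (Icc a b)) :
    ∃ g' G₀ G₁, IsC1Cutoff (fun x => (b - x) / (b - a) * ρ x) g' a b G₀ G₁ := by
  have hgc : ContinuousOn (fun x => (b - x) / (b - a) * ρ x) (Icc a b) :=
    ((continuous_const.sub continuous_id).div_const _).continuousOn.mul hρ
  have hg'c : ContinuousOn (fun x => -1 / (b - a) * ρ x + (b - x) / (b - a) * ρ' x) (Icc a b) :=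
    (continuousOn_const.mul hρ).add
      (((continuous_const.sub continuous_id).div_const _).continuousOn.mul hρ')
  obtain ⟨G₀, hG₀⟩ := isCompact_Icc.exists_bound_of_continuousOn hgc
  obtain ⟨G₁, hG₁⟩ := isCompact_Icc.exists_bound_of_continuousOn hg'c
  refine ⟨_, G₀, G₁, hgc, fun x hx => ?_, hg'c, by simp, fun x hx => ?_, fun x hx => ?_⟩
  · exact ((((hasDerivAt_id' x).const_sub b).div_const (b - a)).mul (hρd x hx)).congr_deriv
      (by ring)
  · simpa only [Real.norm_eq_abs] using hG₀ x hx
  · simpa only [Real.norm_eq_abs] using hG₁ x hx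

noncomputable def rho (V : ℝ → ℝ) (x : ℝ) : ℝ :=
  (1 / 2) * (∫ y in (0:ℝ)..x, V y) - (x / (2 * π)) * ∫ y in (0:ℝ)..π, V y

theorem exists_isC1Cutoff_rho {V : ℝ → ℝ} {a : ℝ} (hV : ContinuousOn V (Icc 0 π)) (ha : 0 ≤ a) :
    ∃ g' G₀ G₁, IsC1Cutoff (fun x => (π - x) / (π - a) * rho V x) g' a π G₀ G₁ := by
  have hsub : Icc a π ⊆ Icc 0 π := Icc_subset_Icc_left ha
  refine exists_isC1Cutoff (ρ' := fun x => 1 / 2 * V x - 1 / (2 * π) * ∫ y in 0..π, V y)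
    (((continuousOn_const.mul fun x hx =>
      (hasDerivWithinAt_integral_Icc hV hx).continuousWithinAt).sub (by fun_prop)).mono hsub)
    (fun x hx => ?_) (((continuousOn_const.mul hV).sub continuousOn_const).mono hsub)
  have hx' : x ∈ Ioo 0 π := ⟨ha.trans_lt hx.1, hx.2⟩
  exact ((((hasDerivWithinAt_integral_Icc hV (Ioo_subset_Icc_self hx')).hasDerivAt
    (Icc_mem_nhds hx'.1 hx'.2)).const_mul (1 / 2)).sub
    (((hasDerivAt_id x).div_const (2 * π)).mul_const _)).congr_deriv (by ring)

theorem continuousOn_of_eq_add_integral {V V' : ℝ → ℝ} {b : ℝ} (hV' : IntegrableOn V' (Icc 0 b))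
    (hV : ∀ x ∈ Icc 0 b, V x = V 0 + ∫ t in 0..x, V' t) : ContinuousOn V (Icc 0 b) := by
  rcases le_or_gt 0 b with hb | hb
  · have := intervalIntegral.continuousOn_primitive_interval (a := 0) (b := b) (μ := volume)
      (f := V') (by rwa [uIcc_of_le hb])
    rw [uIcc_of_le hb] at this
    exact (continuousOn_const.add this).congr hV
  · simp [Icc_eq_empty hb.not_ge]

theorem tail_integral_estimates_general
    (V : ℝ → ℝ)
    (hV : ∃ V' : ℝ → ℝ, IntegrableOn V' (Icc 0 π) ∧
      ∀ x ∈ Icc (0:ℝ) π, V x = V 0 + ∫ t in (0:ℝ)..x, V' t)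
    (ξ ξ' : ℂ → ℝ → ℂ)
    (hξ0 : ∀ z, ξ z 0 = 1)
    (hξ'0 : ∀ z, ξ' z 0 = 0)
    (hξd : ∀ z, ∀ x ∈ Icc (0:ℝ) π, HasDerivWithinAt (ξ z) (ξ' z x) (Icc 0 π) x)
    (hξd' : ∀ z, ∀ x ∈ Icc (0:ℝ) π,
      HasDerivWithinAt (ξ' z) (((V x : ℂ) - z) * ξ z x) (Icc 0 π) x)
    (a : ℝ) (ha0 : 0 < a) (haπ : a < π) :
    ∃ C > 0, ∀ z : ℂ, ∀ n : ℕ, 0 < n →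
      (‖∫ x in a..π, Complex.cos (z ^ (1/2 : ℂ) * x) * (↑((π - x) / (π - a)) : ℂ) *
            (↑((1/2) * (∫ y in (0:ℝ)..x, V y) - (x / (2 * π)) * ∫ y in (0:ℝ)..π, V y) : ℂ) *
            Complex.sin ((n : ℂ) * x)‖ ≤
        (C / n) * Real.exp (π * |(z ^ (1/2 : ℂ)).im|) *
          (1 + ‖z‖ / (1 + π * Real.sqrt ‖z‖))) ∧
      (‖∫ x in a..π, (ξ z x - Complex.cos (z ^ (1/2 : ℂ) * x)) * (↑((π - x) / (π - a)) : ℂ) *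
            (↑((1/2) * (∫ y in (0:ℝ)..x, V y) - (x / (2 * π)) * ∫ y in (0:ℝ)..π, V y) : ℂ) *
            Complex.sin ((n : ℂ) * x)‖ ≤
        (C / n) * Real.exp (π * |(z ^ (1/2 : ℂ)).im|) *
          (1 + 1 / (1 + π * Real.sqrt ‖z‖))) := by
  obtain ⟨V', hV', hVeq⟩ := hV
  have hVc : ContinuousOn V (Icc 0 π) := continuousOn_of_eq_add_integral hV' hVeq
  obtain ⟨M, hM⟩ := isCompact_Icc.exists_bound_of_continuousOn hVc
  obtain ⟨g', G₀, G₁, hg⟩ := exists_isC1Cutoff_rho hVc ha0.le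
  set C₁ := G₀ + (π - a) * G₁ + (1 + π) * ((π - a) * G₀)
  set C₂ := (π * G₀ + (π - a) * (G₀ + π * G₁)) * (π * M * Real.exp (M * π ^ 2))
  set C := max (max C₁ C₂) 1
  have hC₁ : C₁ ≤ C := le_max_of_le_left (le_max_left _ _)
  have hC₂ : C₂ ≤ C := le_max_of_le_left (le_max_right _ _)
  refine ⟨C, by positivity, fun z n hn => ?_⟩
  set s := z ^ (1 / 2 : ℂ)
  have hs : s ^ 2 = z := by simp [s, one_div]
  have hsn : ‖s‖ = √‖z‖ := by rw [← hs, norm_pow, Real.sqrt_sq (norm_nonneg _)]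
  have hξ : IsCosineTypeSolution (fun x => (V x : ℂ)) s π (ξ z) (ξ' z) :=
    ⟨hξd z, by rw [hs]; exact hξd' z, hξ0 z, hξ'0 z⟩
  have hn' : (0 : ℝ) < n := Nat.cast_pos.2 hn
  refine ⟨?_, ?_⟩
  · calc _ = ‖∫ x in a..π, freeCos s x * ((π - x) / (π - a) * rho V x : ℝ) *
            Complex.sin ((n : ℝ) * x)‖ := by simp [freeCos, rho, mul_assoc]
      _ ≤ C₁ * Real.exp (π * |s.im|) * (1 + ‖s‖ ^ 2 / (1 + π * ‖s‖)) / n :=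
          hg.norm_integral_freeCos_mul_sin_le ha0.le haπ.le hn' s
      _ ≤ _ := by
          rw [← norm_pow, hs, hsn, div_mul_eq_mul_div, div_mul_eq_mul_div]
          gcongr
  · calc _ = ‖∫ x in a..π, (ξ z x - freeCos s x) * ((π - x) / (π - a) * rho V x : ℝ) *
            Complex.sin ((n : ℝ) * x)‖ := by simp [freeCos, rho, mul_assoc]
      _ ≤ C₂ * Real.exp (π * |s.im|) / n :=
          hg.norm_integral_sub_freeCos_mul_sin_le ha0.le haπ.le hn' hξ
            (Complex.continuous_ofReal.comp_continuousOn hVc) fun t ht => by simpa using hM t ht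
      _ ≤ C * Real.exp (π * |s.im|) / n := by gcongr
      _ ≤ _ := by
          rw [div_mul_eq_mul_div, div_mul_eq_mul_div]
          refine div_le_div_of_nonneg_right (le_mul_of_one_le_right (by positivity) ?_) hn'.le
          exact le_add_of_nonneg_right (by positivity)

/-- Two estimates on `[a,π]` with `ρ(x) = ½∫₀^x V − (x/2π)∫₀^π V` and
`F(x,z) = ξ(x,z) − cos(√z x)`, for all `z ∈ ℂ` and `n ∈ ℕ`, `n ≥ 1`. -/
theorem tail_integral_estimates
    (V : ℝ → ℝ)
    (hV : ∃ V' : ℝ → ℝ, IntegrableOn V' (Icc 0 π) ∧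
      ∀ x ∈ Icc (0:ℝ) π, V x = V 0 + ∫ t in (0:ℝ)..x, V' t)
    (ξ ξ' : ℂ → ℝ → ℂ)
    (hξ0 : ∀ z, ξ z 0 = 1)
    (hξ'0 : ∀ z, ξ' z 0 = 0)
    (hξd : ∀ z, ∀ x ∈ Icc (0:ℝ) π, HasDerivWithinAt (ξ z) (ξ' z x) (Icc 0 π) x)
    (hξd' : ∀ z, ∀ x ∈ Icc (0:ℝ) π,
      HasDerivWithinAt (ξ' z) (((V x : ℂ) - z) * ξ z x) (Icc 0 π) x)
    (hent : ∀ x ∈ Icc (0:ℝ) π, Differentiable ℂ (fun z => ξ z x))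
    (hreal : ∀ (r x : ℝ), (ξ (r : ℂ) x).im = 0)
    (lam : ℕ → ℝ)
    (hmono : StrictMono lam)
    (hspec : ∀ r : ℝ, ξ' (r : ℂ) π = 0 ↔ ∃ n, r = lam n)
    (a : ℝ) (ha0 : 0 < a) (haπ : a < π) :
    ∃ C > 0, ∀ z : ℂ, ∀ n : ℕ, 0 < n →
      (‖∫ x in a..π, Complex.cos (z ^ (1/2 : ℂ) * x) * (↑((π - x) / (π - a)) : ℂ) *
            (↑((1/2) * (∫ y in (0:ℝ)..x, V y) - (x / (2 * π)) * ∫ y in (0:ℝ)..π, V y) : ℂ) *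
            Complex.sin ((n : ℂ) * x)‖ ≤
        (C / n) * Real.exp (π * |(z ^ (1/2 : ℂ)).im|) *
          (1 + ‖z‖ / (1 + π * Real.sqrt ‖z‖))) ∧
      (‖∫ x in a..π, (ξ z x - Complex.cos (z ^ (1/2 : ℂ) * x)) * (↑((π - x) / (π - a)) : ℂ) *
            (↑((1/2) * (∫ y in (0:ℝ)..x, V y) - (x / (2 * π)) * ∫ y in (0:ℝ)..π, V y) : ℂ) *
            Complex.sin ((n : ℂ) * x)‖ ≤
        (C / n) * Real.exp (π * |(z ^ (1/2 : ℂ)).im|) *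
          (1 + 1 / (1 + π * Real.sqrt ‖z‖))) :=
  tail_integral_estimates_general V hV ξ ξ' hξ0 hξ'0 hξd hξd' a ha0 haπ
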